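/- Let θ₁, θ₂ ≥ 0, set θ̂ = (θ₁ + θ₂)/2, and let C₁, C₂ > 0. Suppose that for every n ≥ 1 the spectral radius of τ_n(|t|^{θ₁})^{−1} T_n(|t|^{θ₁}) is at most C₁ and the spectral radius of τ_n(|t|^{θ₂})^{−1} T_n(|t|^{θ₂}) is at most C₂. Then for every n ≥ 1 the spectral radius of τ_n(|t|^{θ̂})^{−1} T_n(|t|^{θ̂}) is at most √(C₁ C₂). -/

import Mathlib

open Real MeasureTheory Matrix

/-- The `l`-th Fourier (cosine) coefficient of an even function `f` on `[-π, π]`: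
`a_l = (1/π) ∫_0^π f(t) cos(l t) dt`. -/
noncomputable def fourierCoeffR (f : ℝ → ℝ) (l : ℤ) : ℝ :=
  (1 / π) * ∫ t in (0:ℝ)..π, f t * Real.cos ((l : ℝ) * t)

/-- The `n × n` symmetric Toeplitz matrix `T_n(f)` generated by `f`. -/
noncomputable def Tn (n : ℕ) (f : ℝ → ℝ) : Matrix (Fin n) (Fin n) ℝ :=
  Matrix.of fun j k => fourierCoeffR f (((j : ℕ) : ℤ) - ((k : ℕ) : ℤ))

/-- The `n × n` sine-transform matrix `(S_n)_{ij} = √(2/(n+1)) sin(i j π/(n+1))`. -/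
noncomputable def Sn (n : ℕ) : Matrix (Fin n) (Fin n) ℝ :=
  Matrix.of fun i j =>
    Real.sqrt (2 / (n + 1)) *
      Real.sin ((((i : ℕ) + 1) : ℝ) * (((j : ℕ) + 1) : ℝ) * π / (n + 1))

/-- The τ-matrix `τ_n(f) = S_n diag(f(kπ/(n+1))) S_n`. -/
noncomputable def taun (n : ℕ) (f : ℝ → ℝ) : Matrix (Fin n) (Fin n) ℝ :=
  Sn n * Matrix.diagonal (fun k : Fin n => f ((((k : ℕ) + 1) : ℝ) * π / (n + 1))) * Sn n

theorem test (n : ℕ) : (Tn n fun t => |t|) = (Tn n fun t => |t|) := rfl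


lemma re_one_div_sub_one {z : ℂ} (h1 : z ≠ 1) (h2 : Complex.normSq z = 1) :
    (1 / (z - 1)).re = -(1/2) := by
  have hsq : z.re * z.re + z.im * z.im = 1 := by
    rw [Complex.normSq_apply] at h2; linarith
  have hre : z.re ≠ 1 := by
    intro h
    apply h1
    have him : z.im = 0 := by nlinarith [sq_nonneg z.im]
    exact Complex.ext h him
  rw [one_div, Complex.inv_re]
  have h3 : Complex.normSq (z - 1) = 2 - 2 * z.re := by
    rw [Complex.normSq_apply]
    simp only [Complex.sub_re, Complex.sub_im, Complex.one_re, Complex.one_im, sub_zero]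
    nlinarith
  have h4 : (2:ℝ) - 2 * z.re ≠ 0 := by intro h; exact hre (by linarith)
  rw [h3]
  have h5 : (z - 1).re = z.re - 1 := by simp
  rw [h5]
  field_simp
  ring

lemma sum_cos_eq (N : ℕ) (hN : 0 < N) (m : ℤ) (hm0 : m ≠ 0) (hm : |m| < 2*N) :
    ∑ j ∈ Finset.range N, Real.cos (j * (m * π / N)) = (1 - (-1:ℝ)^m)/2 := by
  have hNR : (N:ℝ) ≠ 0 := Nat.cast_ne_zero.mpr hN.ne'
  set φ : ℝ := m * π / N with hφ
  set ζ : ℂ := Complex.exp (φ * Complex.I) with hζ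
  have hζ1 : ζ ≠ 1 := by
    intro h
    obtain ⟨k, hk⟩ := Complex.exp_eq_one_iff.mp h
    have hk' : (φ : ℂ) * Complex.I = ((k * (2*π) : ℝ) : ℂ) * Complex.I := by
      rw [hk]; push_cast; ring
    have hφk : φ = k * (2*π) := by
      have := mul_right_cancel₀ Complex.I_ne_zero hk'
      exact_mod_cast this
    have hmk : (m:ℝ) = 2 * k * N := by
      have h3 := congrArg (fun x : ℝ => x * N) hφk
      simp only [hφ] at h3
      rw [div_mul_cancel₀ _ hNR] at h3
      have h4 : (m:ℝ) * π = (2 * k * N) * π := by rw [h3]; ring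
      exact mul_right_cancel₀ Real.pi_ne_zero h4
    have hmk' : m = 2 * k * N := by exact_mod_cast hmk
    rcases eq_or_ne k 0 with rfl | hk0
    · simp at hmk'; exact hm0 hmk'
    · have : (2*N : ℤ) ≤ |m| := by
        rw [hmk']
        have : (1:ℤ) ≤ |k| := Int.one_le_abs hk0
        calc (2*N:ℤ) = 2*N*1 := by ring
        _ ≤ 2*N*|k| := by
            have : (0:ℤ) ≤ 2*N := by positivity
            exact mul_le_mul_of_nonneg_left ‹(1:ℤ) ≤ |k|› this
        _ = |2*k*N| := by rw [abs_mul, abs_mul]; simp [abs_of_nonneg, Int.ofNat_nonneg]; ring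
      omega
  have hζj : ∀ j : ℕ, ζ ^ j = Complex.exp (((j : ℝ) * φ : ℝ) * Complex.I) := by
    intro j
    rw [hζ, ← Complex.exp_nat_mul]
    push_cast
    ring_nf
  have hcos : ∀ j : ℕ, (ζ ^ j).re = Real.cos (j * φ) := by
    intro j; rw [hζj j, Complex.exp_ofReal_mul_I_re]
  have hζN : ζ ^ N = (((-1:ℝ)^m : ℝ) : ℂ) := by
    rw [hζ, ← Complex.exp_nat_mul]
    have hNφ : (N:ℝ) * φ = m * π := by rw [hφ]; field_simp
    have harg : (N:ℂ) * ((φ:ℂ) * Complex.I) = (m : ℂ) * (↑π * Complex.I) := by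
      calc (N:ℂ) * ((φ:ℂ) * Complex.I) = (((N:ℝ) * φ : ℝ) : ℂ) * Complex.I := by
            push_cast; ring
        _ = (((m:ℝ) * π : ℝ) : ℂ) * Complex.I := by rw [hNφ]
        _ = (m : ℂ) * (↑π * Complex.I) := by push_cast; ring
    rw [harg, Complex.exp_int_mul, Complex.exp_pi_mul_I]
    push_cast
    ring
  have hgeom := geom_sum_eq hζ1 N
  have hre := congrArg Complex.re hgeom
  rw [Complex.re_sum] at hre
  have hnormSq : Complex.normSq ζ = 1 := by
    rw [Complex.normSq_apply, hζ]
    rw [Complex.exp_ofReal_mul_I_re, Complex.exp_ofReal_mul_I_im]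
    nlinarith [Real.sin_sq_add_cos_sq φ]
  have hrhs : ((ζ ^ N - 1) / (ζ - 1)).re = ((-1:ℝ)^m - 1) * (-(1/2)) := by
    rw [hζN]
    have : ((((-1:ℝ)^m : ℝ) : ℂ) - 1) / (ζ - 1) = (((-1:ℝ)^m - 1 : ℝ) : ℂ) * (1 / (ζ - 1)) := by
      push_cast; ring
    rw [this, Complex.re_ofReal_mul, re_one_div_sub_one hζ1 hnormSq]
  rw [hrhs] at hre
  calc ∑ j ∈ Finset.range N, Real.cos (j * (m * π / N))
      = ∑ j ∈ Finset.range N, (ζ ^ j).re := by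
        refine Finset.sum_congr rfl fun j _ => ?_
        rw [hcos j, hφ]
    _ = ((-1:ℝ)^m - 1) * (-(1/2)) := hre
    _ = (1 - (-1:ℝ)^m)/2 := by ring

lemma neg_one_zpow_two_mul (k : ℤ) : ((-1:ℝ))^(2*k) = 1 := by
  rw [_root_.zpow_mul]; norm_num

lemma sum_sin_mul_sin (N a b : ℕ) (ha : 1 ≤ a) (ha' : a < N) (hb : 1 ≤ b) (hb' : b < N) :
    ∑ j ∈ Finset.range N, Real.sin (a * j * π / N) * Real.sin (b * j * π / N)
      = if a = b then (N:ℝ) / 2 else 0 := by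
  have hN : 0 < N := lt_of_le_of_lt (Nat.zero_le _) ha'
  have hNR : (N:ℝ) ≠ 0 := Nat.cast_ne_zero.mpr hN.ne'
  have key : ∀ j : ℕ, Real.sin (a * j * π / N) * Real.sin (b * j * π / N)
      = (Real.cos (j * ((((a:ℤ) - b : ℤ) : ℝ) * π / N))
          - Real.cos (j * ((((a:ℤ) + b : ℤ) : ℝ) * π / N))) / 2 := by
    intro j
    have h1 : (j:ℝ) * ((((a:ℤ) - b : ℤ) : ℝ) * π / N) = a*j*π/N - b*j*π/N := by
      push_cast; ring
    have h2 : (j:ℝ) * ((((a:ℤ) + b : ℤ) : ℝ) * π / N) = a*j*π/N + b*j*π/N := by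
      push_cast; ring
    rw [h1, h2, Real.cos_sub, Real.cos_add]
    ring
  simp_rw [key]
  rw [← Finset.sum_div, Finset.sum_sub_distrib]
  have hsum2 : ∑ j ∈ Finset.range N, Real.cos (j * ((((a:ℤ) + b : ℤ) : ℝ) * π / N))
      = (1 - (-1:ℝ)^((a:ℤ)+b))/2 := by
    apply sum_cos_eq N hN ((a:ℤ)+b) (by omega)
    rw [abs_of_nonneg (by omega : (0:ℤ) ≤ (a:ℤ)+b)]
    omega
  by_cases hab : a = b
  · subst hab
    have hzero : ∀ j ∈ Finset.range N, Real.cos (j * ((((a:ℤ) - a : ℤ) : ℝ) * π / N)) = 1 := by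
      intro j _
      simp
    rw [Finset.sum_congr rfl hzero, Finset.sum_const, hsum2]
    have : ((a:ℤ) + a) = 2 * a := by ring
    rw [this, neg_one_zpow_two_mul]
    simp
  · have hsum1 : ∑ j ∈ Finset.range N, Real.cos (j * ((((a:ℤ) - b : ℤ) : ℝ) * π / N))
        = (1 - (-1:ℝ)^((a:ℤ)-b))/2 := by
      apply sum_cos_eq N hN ((a:ℤ)-b) (by omega)
      rw [abs_lt]; omega
    have hpow : ((-1:ℝ))^((a:ℤ)-b) = ((-1:ℝ))^((a:ℤ)+b) := by
      have : ((a:ℤ)+b) = ((a:ℤ)-b) + 2*b := by ring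
      rw [this, zpow_add₀ (by norm_num : (-1:ℝ) ≠ 0), neg_one_zpow_two_mul, mul_one]
    rw [hsum1, hsum2, hpow]
    simp [hab]


lemma Sn_mul_Sn (n : ℕ) : Sn n * Sn n = 1 := by
  ext i k
  rw [Matrix.mul_apply]
  have hc : (0:ℝ) ≤ 2/(n+1) := by positivity
  have step : ∀ j : Fin n, Sn n i j * Sn n j k
      = (2/(n+1)) * (Real.sin (((i:ℕ)+1 : ℝ) * ((j:ℕ)+1 : ℝ) * π / (n+1))
          * Real.sin (((k:ℕ)+1 : ℝ) * ((j:ℕ)+1 : ℝ) * π / (n+1))) := by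
    intro j
    show (Real.sqrt (2/(n+1)) * _) * (Real.sqrt (2/(n+1)) * _) = _
    rw [show ∀ x y : ℝ, (Real.sqrt (2/(n+1)) * x) * (Real.sqrt (2/(n+1)) * y)
        = (Real.sqrt (2/(n+1)) * Real.sqrt (2/(n+1))) * (x*y) from fun x y => by ring,
      Real.mul_self_sqrt hc]
    congr 2
    ring
  rw [Finset.sum_congr rfl (fun j _ => step j), ← Finset.mul_sum]
  have hconv : ∑ j : Fin n, (Real.sin (((i:ℕ)+1 : ℝ) * ((j:ℕ)+1 : ℝ) * π / (n+1))
          * Real.sin (((k:ℕ)+1 : ℝ) * ((j:ℕ)+1 : ℝ) * π / (n+1)))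
      = ∑ j ∈ Finset.range (n+1), Real.sin ((((i:ℕ)+1:ℕ):ℝ) * (j:ℝ) * π / ((n+1:ℕ):ℝ))
          * Real.sin ((((k:ℕ)+1:ℕ):ℝ) * (j:ℝ) * π / ((n+1:ℕ):ℝ)) := by
    rw [Fin.sum_univ_eq_sum_range (fun m : ℕ => Real.sin (((i:ℕ)+1 : ℝ) * ((m:ℝ)+1) * π / (n+1))
          * Real.sin (((k:ℕ)+1 : ℝ) * ((m:ℝ)+1) * π / (n+1))) n,
      Finset.sum_range_succ']
    push_cast
    simp
  rw [hconv, sum_sin_mul_sin (n+1) ((i:ℕ)+1) ((k:ℕ)+1) (by omega)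
    (Nat.succ_lt_succ i.isLt) (by omega) (Nat.succ_lt_succ k.isLt)]
  rw [Matrix.one_apply]
  by_cases h : i = k
  · subst h
    rw [if_pos rfl, if_pos rfl]
    push_cast
    field_simp
  · rw [if_neg (fun hcon => h (Fin.ext (by omega))), if_neg h, mul_zero]

lemma Sn_transpose (n : ℕ) : (Sn n)ᵀ = Sn n := by
  ext i j
  simp only [Matrix.transpose_apply, Sn, Matrix.of_apply]
  ring_nf

lemma Tn_transpose (n : ℕ) (f : ℝ → ℝ) : (Tn n f)ᵀ = Tn n f := by
  ext i j
  simp only [Matrix.transpose_apply, Tn, Matrix.of_apply]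
  unfold fourierCoeffR
  congr 1
  apply intervalIntegral.integral_congr
  intro t _
  have : ((((j:ℕ):ℤ) - ((i:ℕ):ℤ) : ℤ) : ℝ) * t = -((((((i:ℕ):ℤ) - ((j:ℕ):ℤ) : ℤ)):ℝ) * t) := by
    push_cast; ring
  simp only [this, Real.cos_neg]

lemma taun_transpose (n : ℕ) (f : ℝ → ℝ) : (taun n f)ᵀ = taun n f := by
  unfold taun
  rw [Matrix.transpose_mul, Matrix.transpose_mul, Matrix.diagonal_transpose, Sn_transpose]
  rw [mul_assoc]

lemma taun_mul (n : ℕ) (f g : ℝ → ℝ) :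
    taun n f * taun n g
      = Sn n * Matrix.diagonal (fun k : Fin n =>
          f ((((k : ℕ) + 1) : ℝ) * π / (n + 1)) * g ((((k : ℕ) + 1) : ℝ) * π / (n + 1))) * Sn n := by
  unfold taun
  have h1 : ∀ (D E : Matrix (Fin n) (Fin n) ℝ),
      (Sn n * D * Sn n) * (Sn n * E * Sn n) = Sn n * (D * E) * Sn n := by
    intro D E
    calc (Sn n * D * Sn n) * (Sn n * E * Sn n)
        = Sn n * D * (Sn n * Sn n) * (E * Sn n) := by simp only [mul_assoc]
      _ = Sn n * (D * E) * Sn n := by rw [Sn_mul_Sn, mul_one]; simp only [mul_assoc]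
  rw [h1, Matrix.diagonal_mul_diagonal]

-- grid points are positive
lemma grid_pos (n : ℕ) (k : Fin n) : 0 < (((k : ℕ) + 1) : ℝ) * π / (n + 1) := by
  have := Real.pi_pos
  positivity

lemma taun_pow_mul (n : ℕ) (a b : ℝ) :
    taun n (fun t => |t| ^ a) * taun n (fun t => |t| ^ b) = taun n (fun t => |t| ^ (a+b)) := by
  have hfun : (fun k : Fin n => |(((k : ℕ) + 1) : ℝ) * π / (n + 1)| ^ a
        * |(((k : ℕ) + 1) : ℝ) * π / (n + 1)| ^ b)
      = (fun k : Fin n => |(((k : ℕ) + 1) : ℝ) * π / (n + 1)| ^ (a+b)) := by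
    funext k
    have h := grid_pos n k
    rw [abs_of_pos h, ← Real.rpow_add h]
  rw [taun_mul, hfun]
  rfl

lemma taun_pow_zero (n : ℕ) : taun n (fun t => |t| ^ (0:ℝ)) = 1 := by
  unfold taun
  have : (fun k : Fin n => |(((k : ℕ) + 1) : ℝ) * π / (n + 1)| ^ (0:ℝ)) = fun _ => (1:ℝ) := by
    funext k; rw [Real.rpow_zero]
  rw [this, Matrix.diagonal_one, mul_one, Sn_mul_Sn]

lemma taun_pow_inv (n : ℕ) (a : ℝ) :
    (taun n (fun t => |t| ^ a))⁻¹ = taun n (fun t => |t| ^ (-a)) := by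
  apply Matrix.inv_eq_right_inv
  rw [taun_pow_mul, add_neg_cancel, taun_pow_zero]

-- spectrum under conjugation
lemma isUnit_conj {k : ℕ} (P Q : Matrix (Fin k) (Fin k) ℝ)
    (hPQ : P * Q = 1) (hQP : Q * P = 1) (B : Matrix (Fin k) (Fin k) ℝ)
    (hB : IsUnit B) : IsUnit (Q * B * P) := by
  obtain ⟨u, rfl⟩ := hB
  set B : Matrix (Fin k) (Fin k) ℝ := (u : Matrix (Fin k) (Fin k) ℝ)
  set C : Matrix (Fin k) (Fin k) ℝ := ((u⁻¹ : (Matrix (Fin k) (Fin k) ℝ)ˣ) : Matrix (Fin k) (Fin k) ℝ)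
  have hBC : B * C = 1 := u.mul_inv
  have hCB : C * B = 1 := u.inv_mul
  have h1 : (Q * B * P) * (Q * C * P) = 1 := by
    have h : (Q * B * P) * (Q * C * P) = Q * (B * (P * Q) * C) * P := by
      simp only [mul_assoc]
    rw [h, hPQ, mul_one, hBC, mul_one, hQP]
  have h2 : (Q * C * P) * (Q * B * P) = 1 := by
    have h : (Q * C * P) * (Q * B * P) = Q * (C * (P * Q) * B) * P := by
      simp only [mul_assoc]
    rw [h, hPQ, mul_one, hCB, mul_one, hQP]
  exact ⟨⟨Q * B * P, Q * C * P, h1, h2⟩, rfl⟩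

lemma spectrum_conj {k : ℕ} (P Q A : Matrix (Fin k) (Fin k) ℝ)
    (hPQ : P * Q = 1) (hQP : Q * P = 1) :
    spectrum ℝ (Q * A * P) = spectrum ℝ A := by
  ext z
  rw [spectrum.mem_iff, spectrum.mem_iff]
  have key : algebraMap ℝ (Matrix (Fin k) (Fin k) ℝ) z - Q * A * P
      = Q * (algebraMap ℝ (Matrix (Fin k) (Fin k) ℝ) z - A) * P := by
    rw [Matrix.mul_sub, Matrix.sub_mul]
    congr 1
    rw [Algebra.algebraMap_eq_smul_one, Matrix.mul_smul, mul_one, Matrix.smul_mul, hQP]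
  rw [key]
  constructor
  · intro h h2
    exact h (isUnit_conj P Q hPQ hQP _ h2)
  · intro h h2
    apply h
    have h3 := isUnit_conj Q P hQP hPQ _ h2
    have h4 : P * (Q * (algebraMap ℝ (Matrix (Fin k) (Fin k) ℝ) z - A) * P) * Q
        = algebraMap ℝ (Matrix (Fin k) (Fin k) ℝ) z - A := by
      calc P * (Q * (algebraMap ℝ (Matrix (Fin k) (Fin k) ℝ) z - A) * P) * Q
          = (P * Q) * (algebraMap ℝ (Matrix (Fin k) (Fin k) ℝ) z - A) * (P * Q) := by
            simp only [mul_assoc]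
        _ = _ := by rw [hPQ, one_mul, mul_one]
    rwa [h4] at h3


lemma mem_spectrum_iff_det {k : ℕ} (M : Matrix (Fin k) (Fin k) ℝ) (z : ℝ) :
    z ∈ spectrum ℝ M ↔ (z • (1 : Matrix (Fin k) (Fin k) ℝ) - M).det = 0 := by
  rw [spectrum.mem_iff, Algebra.algebraMap_eq_smul_one, Matrix.isUnit_iff_isUnit_det,
    isUnit_iff_ne_zero, not_ne_iff]

lemma exists_eigenvector {k : ℕ} (M : Matrix (Fin k) (Fin k) ℝ) (z : ℝ)
    (hz : z ∈ spectrum ℝ M) : ∃ v : Fin k → ℝ, v ≠ 0 ∧ M *ᵥ v = z • v := by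
  rw [mem_spectrum_iff_det, ← Matrix.exists_mulVec_eq_zero_iff] at hz
  obtain ⟨v, hv0, hv⟩ := hz
  refine ⟨v, hv0, ?_⟩
  rw [Matrix.sub_mulVec, Matrix.smul_mulVec, Matrix.one_mulVec] at hv
  exact (sub_eq_zero.mp hv).symm

lemma star_eq_transpose {k : ℕ} (A : Matrix (Fin k) (Fin k) ℝ) : star A = Aᵀ := by
  ext i j
  simp [Matrix.star_apply, Matrix.transpose_apply]

lemma form_le_of_spectrum {k : ℕ} (M : Matrix (Fin k) (Fin k) ℝ) (hsym : Mᵀ = M) (C : ℝ)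
    (h : ∀ z ∈ spectrum ℝ M, |z| ≤ C) (x : Fin k → ℝ) :
    x ⬝ᵥ M *ᵥ x ≤ C * (x ⬝ᵥ x) := by
  have hherm : M.IsHermitian := by
    have : Mᴴ = Mᵀ := by ext i j; simp [Matrix.conjTranspose_apply]
    rw [Matrix.IsHermitian, this, hsym]
  set V : Matrix (Fin k) (Fin k) ℝ := (hherm.eigenvectorUnitary : Matrix (Fin k) (Fin k) ℝ)
    with hV
  have hmem := hherm.eigenvectorUnitary.2
  rw [Matrix.mem_unitaryGroup_iff] at hmem
  have hVVt : V * Vᵀ = 1 := by rw [← star_eq_transpose]; exact hmem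
  have hspec0 := hherm.spectral_theorem
  have hofReal : (RCLike.ofReal ∘ hherm.eigenvalues : Fin k → ℝ) = hherm.eigenvalues := by
    funext i; simp
  rw [hofReal, Unitary.conjStarAlgAut_apply, star_eq_transpose] at hspec0
  set d : Fin k → ℝ := hherm.eigenvalues with hd
  set y : Fin k → ℝ := Vᵀ *ᵥ x with hy
  have hform : x ⬝ᵥ M *ᵥ x = y ⬝ᵥ Matrix.diagonal d *ᵥ y := by
    rw [hspec0]
    rw [← Matrix.mulVec_mulVec, ← Matrix.mulVec_mulVec]
    rw [Matrix.dotProduct_mulVec, ← Matrix.mulVec_transpose, hy]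
  have hnorm : y ⬝ᵥ y = x ⬝ᵥ x := by
    rw [hy, Matrix.dotProduct_mulVec, ← Matrix.mulVec_transpose, Matrix.mulVec_mulVec,
      Matrix.transpose_transpose, hVVt,
      Matrix.one_mulVec]
  rw [hform]
  have hdot : y ⬝ᵥ Matrix.diagonal d *ᵥ y = ∑ i, d i * (y i * y i) := by
    simp only [dotProduct, Matrix.mulVec_diagonal]
    exact Finset.sum_congr rfl fun i _ => by ring
  rw [hdot, ← hnorm]
  have hyy : y ⬝ᵥ y = ∑ i, y i * y i := rfl
  rw [hyy, Finset.mul_sum]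
  apply Finset.sum_le_sum
  intro i _
  have hdi := h (d i) (hherm.eigenvalues_mem_spectrum_real i)
  have h1 : d i * (y i * y i) ≤ |d i| * (y i * y i) :=
    mul_le_mul_of_nonneg_right (le_abs_self _) (mul_self_nonneg _)
  have h2 : |d i| * (y i * y i) ≤ C * (y i * y i) :=
    mul_le_mul_of_nonneg_right hdi (mul_self_nonneg _)
  linarith

lemma cont_abs_rpow (θ : ℝ) (hθ : 0 ≤ θ) : Continuous (fun t : ℝ => |t| ^ θ) :=
  continuous_abs.rpow_const (fun _ => Or.inr hθ)

noncomputable def Cfn (n : ℕ) (x : Fin n → ℝ) (t : ℝ) : ℝ :=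
  ∑ j : Fin n, x j * Real.cos ((j : ℕ) * t)

noncomputable def Sfn (n : ℕ) (x : Fin n → ℝ) (t : ℝ) : ℝ :=
  ∑ j : Fin n, x j * Real.sin ((j : ℕ) * t)

lemma cont_Cfn (n : ℕ) (x : Fin n → ℝ) : Continuous (Cfn n x) := by
  apply continuous_finset_sum
  intro j _
  exact continuous_const.mul (Real.continuous_cos.comp (continuous_const.mul continuous_id))

lemma cont_Sfn (n : ℕ) (x : Fin n → ℝ) : Continuous (Sfn n x) := by
  apply continuous_finset_sum
  intro j _
  exact continuous_const.mul (Real.continuous_sin.comp (continuous_const.mul continuous_id))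

lemma intInt_sum {m : ℕ} (G : Fin m → ℝ → ℝ)
    (hG : ∀ k, IntervalIntegrable (G k) volume 0 π) :
    IntervalIntegrable (fun t => ∑ k : Fin m, G k t) volume 0 π := by
  have h := IntervalIntegrable.sum (μ := volume) (a := (0:ℝ)) (b := π)
    Finset.univ (f := G) (fun k _ => hG k)
  have heq : (∑ k ∈ Finset.univ, G k) = fun t => ∑ k : Fin m, G k t := by
    funext t; simp
  rwa [heq] at h

lemma integral_double_sum {m : ℕ} (F : Fin m → Fin m → ℝ → ℝ)
    (hF : ∀ j k, IntervalIntegrable (F j k) volume 0 π) :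
    (∫ t in (0:ℝ)..π, ∑ j : Fin m, ∑ k : Fin m, F j k t)
      = ∑ j : Fin m, ∑ k : Fin m, ∫ t in (0:ℝ)..π, F j k t := by
  have step1 : (∫ t in (0:ℝ)..π, ∑ j : Fin m, ∑ k : Fin m, F j k t)
      = ∑ j : Fin m, ∫ t in (0:ℝ)..π, ∑ k : Fin m, F j k t := by
    apply intervalIntegral.integral_finset_sum
    exact fun j _ => intInt_sum _ (fun k => hF j k)
  exact step1.trans (Finset.sum_congr rfl fun j _ =>
    intervalIntegral.integral_finset_sum (fun k _ => hF j k))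

lemma toeplitz_form (n : ℕ) (θ : ℝ) (hθ : 0 ≤ θ) (x y : Fin n → ℝ) :
    x ⬝ᵥ (Tn n (fun t => |t| ^ θ)) *ᵥ y
      = (1/π) * ∫ t in (0:ℝ)..π,
          |t| ^ θ * (Cfn n x t * Cfn n y t + Sfn n x t * Sfn n y t) := by
  have hf := cont_abs_rpow θ hθ
  have hpt : ∀ t : ℝ, |t| ^ θ * (Cfn n x t * Cfn n y t + Sfn n x t * Sfn n y t)
      = ∑ j : Fin n, ∑ k : Fin n, x j * y k *
          (|t| ^ θ * Real.cos ((((((j:ℕ):ℤ) - ((k:ℕ):ℤ)) : ℤ) : ℝ) * t)) := by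
    intro t
    have expand : Cfn n x t * Cfn n y t + Sfn n x t * Sfn n y t
        = ∑ j : Fin n, ∑ k : Fin n, x j * y k *
            (Real.cos ((j:ℕ) * t) * Real.cos ((k:ℕ) * t)
              + Real.sin ((j:ℕ) * t) * Real.sin ((k:ℕ) * t)) := by
      unfold Cfn Sfn
      rw [Finset.sum_mul_sum, Finset.sum_mul_sum, ← Finset.sum_add_distrib]
      refine Finset.sum_congr rfl fun j _ => ?_
      rw [← Finset.sum_add_distrib]
      exact Finset.sum_congr rfl fun k _ => by ring
    rw [expand, Finset.mul_sum]
    refine Finset.sum_congr rfl fun j _ => ?_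
    rw [Finset.mul_sum]
    refine Finset.sum_congr rfl fun k _ => ?_
    have harg : ((((j:ℕ):ℤ) - ((k:ℕ):ℤ) : ℤ) : ℝ) * t = (j:ℕ)*t - (k:ℕ)*t := by
      push_cast; ring
    rw [harg, Real.cos_sub]
    ring
  have hint : ∀ (j k : Fin n), IntervalIntegrable
      (fun t => x j * y k * (|t| ^ θ *
        Real.cos ((((((j:ℕ):ℤ) - ((k:ℕ):ℤ)) : ℤ) : ℝ) * t))) volume 0 π := by
    intro j k
    apply Continuous.intervalIntegrable
    exact continuous_const.mul (hf.mul (Real.continuous_cos.comp (continuous_const.mul continuous_id)))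
  calc x ⬝ᵥ (Tn n (fun t => |t| ^ θ)) *ᵥ y
      = ∑ j : Fin n, ∑ k : Fin n, x j * y k
          * fourierCoeffR (fun t => |t| ^ θ) (((j:ℕ):ℤ) - ((k:ℕ):ℤ)) := by
        simp only [dotProduct, Matrix.mulVec, Tn, Matrix.of_apply]
        refine Finset.sum_congr rfl fun j _ => ?_
        rw [Finset.mul_sum]
        exact Finset.sum_congr rfl fun k _ => by ring
    _ = ∑ j : Fin n, ∑ k : Fin n, (1/π) * ∫ t in (0:ℝ)..π, x j * y k *
          (|t| ^ θ * Real.cos ((((((j:ℕ):ℤ) - ((k:ℕ):ℤ)) : ℤ) : ℝ) * t)) := by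
        refine Finset.sum_congr rfl fun j _ => Finset.sum_congr rfl fun k _ => ?_
        unfold fourierCoeffR
        rw [intervalIntegral.integral_const_mul]
        ring
    _ = (1/π) * ∫ t in (0:ℝ)..π,
          |t| ^ θ * (Cfn n x t * Cfn n y t + Sfn n x t * Sfn n y t) := by
        simp_rw [hpt]
        have swap := integral_double_sum
          (fun (j k : Fin n) (t : ℝ) => x j * y k *
            (|t| ^ θ * Real.cos ((((((j:ℕ):ℤ) - ((k:ℕ):ℤ)) : ℤ) : ℝ) * t)))
          (fun j k => hint j k)
        rw [swap, Finset.mul_sum]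
        refine Finset.sum_congr rfl fun j _ => ?_
        rw [Finset.mul_sum]

lemma cs2 (a b c d : ℝ) : a*c + b*d ≤ Real.sqrt (a^2+b^2) * Real.sqrt (c^2+d^2) := by
  have h3 : (a*c+b*d)^2 ≤ (a^2+b^2)*(c^2+d^2) := by nlinarith [sq_nonneg (a*d - b*c)]
  calc a*c+b*d ≤ |a*c+b*d| := le_abs_self _
    _ = Real.sqrt ((a*c+b*d)^2) := (Real.sqrt_sq_eq_abs _).symm
    _ ≤ Real.sqrt ((a^2+b^2)*(c^2+d^2)) := Real.sqrt_le_sqrt h3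
    _ = Real.sqrt (a^2+b^2) * Real.sqrt (c^2+d^2) := Real.sqrt_mul (by positivity) _

lemma pw_half (θa θb : ℝ) (ha : 0 ≤ θa) (hb : 0 ≤ θb) (t : ℝ) :
    |t| ^ ((θa + θb)/2) = Real.sqrt (|t| ^ θa) * Real.sqrt (|t| ^ θb) := by
  by_cases h0 : θa + θb = 0
  · have h1 : θa = 0 := le_antisymm (by linarith) ha
    have h2 : θb = 0 := le_antisymm (by linarith) hb
    simp [h1, h2, Real.rpow_zero]
  · have hs : θa * (1/2) + θb * (1/2) ≠ 0 := by intro h; apply h0; linarith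
    rw [Real.sqrt_eq_rpow, Real.sqrt_eq_rpow, ← Real.rpow_mul (abs_nonneg t),
      ← Real.rpow_mul (abs_nonneg t), ← Real.rpow_add' (abs_nonneg t) hs]
    congr 1
    ring

lemma sq_helper (s c1 s1 : ℝ) (hs : 0 ≤ s) :
    (Real.sqrt s * c1)^2 + (Real.sqrt s * s1)^2 = s * (c1*c1 + s1*s1) := by
  have h := Real.sq_sqrt hs
  linear_combination (c1*c1 + s1*s1) * h

noncomputable def Afn (n : ℕ) (θ : ℝ) (u : Fin n → ℝ) : ℝ → ℝ :=
  fun t => |t| ^ θ * (Cfn n u t * Cfn n u t + Sfn n u t * Sfn n u t)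

lemma cont_Afn (n : ℕ) (θ : ℝ) (hθ : 0 ≤ θ) (u : Fin n → ℝ) : Continuous (Afn n θ u) :=
  (cont_abs_rpow θ hθ).mul
    (((cont_Cfn n u).mul (cont_Cfn n u)).add ((cont_Sfn n u).mul (cont_Sfn n u)))

lemma Afn_nonneg (n : ℕ) (θ : ℝ) (u : Fin n → ℝ) (t : ℝ) : 0 ≤ Afn n θ u t := by
  unfold Afn
  have h1 : (0:ℝ) ≤ |t| ^ θ := Real.rpow_nonneg (abs_nonneg t) θ
  nlinarith [mul_self_nonneg (Cfn n u t), mul_self_nonneg (Sfn n u t)]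

lemma mixed_cs (n : ℕ) (θa θb : ℝ) (ha : 0 ≤ θa) (hb : 0 ≤ θb) (u w : Fin n → ℝ) :
    u ⬝ᵥ (Tn n (fun t => |t| ^ ((θa + θb)/2))) *ᵥ w
      ≤ Real.sqrt (u ⬝ᵥ (Tn n (fun t => |t| ^ θa)) *ᵥ u)
        * Real.sqrt (w ⬝ᵥ (Tn n (fun t => |t| ^ θb)) *ᵥ w) := by
  have hπ := Real.pi_pos
  have hAc := cont_Afn n θa ha u
  have hBc := cont_Afn n θb hb w
  have hsAc : Continuous (fun t => Real.sqrt (Afn n θa u t)) :=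
    Real.continuous_sqrt.comp hAc
  have hsBc : Continuous (fun t => Real.sqrt (Afn n θb w t)) :=
    Real.continuous_sqrt.comp hBc
  set P := ∫ t in (0:ℝ)..π, Afn n θa u t with hP
  set Q := ∫ t in (0:ℝ)..π, Afn n θb w t with hQ
  set J := ∫ t in (0:ℝ)..π, Real.sqrt (Afn n θa u t) * Real.sqrt (Afn n θb w t) with hJdef
  have hAint : IntervalIntegrable (Afn n θa u) volume 0 π := hAc.intervalIntegrable _ _
  have hBint : IntervalIntegrable (Afn n θb w) volume 0 π := hBc.intervalIntegrable _ _
  have hJint : IntervalIntegrable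
      (fun t => Real.sqrt (Afn n θa u t) * Real.sqrt (Afn n θb w t)) volume 0 π :=
    (hsAc.mul hsBc).intervalIntegrable _ _
  have hP0 : 0 ≤ P := intervalIntegral.integral_nonneg hπ.le (fun t _ => Afn_nonneg n θa u t)
  have hQ0 : 0 ≤ Q := intervalIntegral.integral_nonneg hπ.le (fun t _ => Afn_nonneg n θb w t)
  have hJ0 : 0 ≤ J := intervalIntegral.integral_nonneg hπ.le
    (fun t _ => mul_nonneg (Real.sqrt_nonneg _) (Real.sqrt_nonneg _))
  -- pointwise bound and I ≤ J
  have hIle : (∫ t in (0:ℝ)..π,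
        |t| ^ ((θa+θb)/2) * (Cfn n u t * Cfn n w t + Sfn n u t * Sfn n w t)) ≤ J := by
    apply intervalIntegral.integral_mono_on hπ.le _ hJint
    · intro t _
      have e0 : |t| ^ ((θa+θb)/2) * (Cfn n u t * Cfn n w t + Sfn n u t * Sfn n w t)
          = (Real.sqrt (|t|^θa) * Cfn n u t) * (Real.sqrt (|t|^θb) * Cfn n w t)
            + (Real.sqrt (|t|^θa) * Sfn n u t) * (Real.sqrt (|t|^θb) * Sfn n w t) := by
        rw [pw_half θa θb ha hb t]; ring
      rw [e0]
      have key := cs2 (Real.sqrt (|t|^θa) * Cfn n u t) (Real.sqrt (|t|^θa) * Sfn n u t)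
        (Real.sqrt (|t|^θb) * Cfn n w t) (Real.sqrt (|t|^θb) * Sfn n w t)
      rwa [sq_helper _ _ _ (Real.rpow_nonneg (abs_nonneg t) θa),
        sq_helper _ _ _ (Real.rpow_nonneg (abs_nonneg t) θb)] at key
    · exact (((cont_abs_rpow _ (by positivity)).mul
        (((cont_Cfn n u).mul (cont_Cfn n w)).add
          ((cont_Sfn n u).mul (cont_Sfn n w))))).intervalIntegrable _ _
  -- J² ≤ P Q via discriminant
  have key : ∀ s : ℝ, 0 ≤ P * (s*s) + (-(2*J))*s + Q := by
    intro s
    have hcomb : IntervalIntegrable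
        (fun t => s*s*Afn n θa u t
          - 2*s*(Real.sqrt (Afn n θa u t)*Real.sqrt (Afn n θb w t)) + Afn n θb w t)
        volume 0 π := by
      apply IntervalIntegrable.add _ hBint
      exact (hAint.const_mul _).sub (hJint.const_mul _)
    have hpt : ∀ t ∈ Set.Icc (0:ℝ) π, 0 ≤ s*s*Afn n θa u t
        - 2*s*(Real.sqrt (Afn n θa u t)*Real.sqrt (Afn n θb w t)) + Afn n θb w t := by
      intro t _
      have h1 := Real.sq_sqrt (Afn_nonneg n θa u t)
      have h2 := Real.sq_sqrt (Afn_nonneg n θb w t)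
      nlinarith [sq_nonneg (s*Real.sqrt (Afn n θa u t) - Real.sqrt (Afn n θb w t))]
    have h0 : (0:ℝ) ≤ ∫ t in (0:ℝ)..π, (s*s*Afn n θa u t
        - 2*s*(Real.sqrt (Afn n θa u t)*Real.sqrt (Afn n θb w t)) + Afn n θb w t) :=
      intervalIntegral.integral_nonneg hπ.le hpt
    have heq : (∫ t in (0:ℝ)..π, (s*s*Afn n θa u t
          - 2*s*(Real.sqrt (Afn n θa u t)*Real.sqrt (Afn n θb w t)) + Afn n θb w t))
        = s*s*P - 2*s*J + Q := by
      rw [intervalIntegral.integral_add ((hAint.const_mul _).sub (hJint.const_mul _)) hBint,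
        intervalIntegral.integral_sub (hAint.const_mul _) (hJint.const_mul _),
        intervalIntegral.integral_const_mul, intervalIntegral.integral_const_mul]
    rw [heq] at h0
    linarith
  have hdisc := discrim_le_zero key
  rw [discrim] at hdisc
  have hJ2 : J^2 ≤ P*Q := by nlinarith
  have hJle : J ≤ Real.sqrt P * Real.sqrt Q := by
    rw [← Real.sqrt_mul hP0]
    calc J = Real.sqrt (J^2) := (Real.sqrt_sq hJ0).symm
      _ ≤ Real.sqrt (P*Q) := Real.sqrt_le_sqrt hJ2
  -- assemble
  rw [toeplitz_form n ((θa+θb)/2) (by positivity) u w, toeplitz_form n θa ha u u,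
    toeplitz_form n θb hb w w]
  have hπinv : (0:ℝ) ≤ 1/π := by positivity
  have hsplit : Real.sqrt ((1/π) * P) * Real.sqrt ((1/π) * Q)
      = (1/π) * (Real.sqrt P * Real.sqrt Q) := by
    rw [Real.sqrt_mul hπinv, Real.sqrt_mul hπinv]
    have hc := Real.mul_self_sqrt hπinv
    calc Real.sqrt (1/π) * Real.sqrt P * (Real.sqrt (1/π) * Real.sqrt Q)
        = (Real.sqrt (1/π) * Real.sqrt (1/π)) * (Real.sqrt P * Real.sqrt Q) := by ring
      _ = (1/π) * (Real.sqrt P * Real.sqrt Q) := by rw [hc]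
  show (1/π) * (∫ t in (0:ℝ)..π,
        |t| ^ ((θa+θb)/2) * (Cfn n u t * Cfn n w t + Sfn n u t * Sfn n w t))
      ≤ Real.sqrt ((1/π) * P) * Real.sqrt ((1/π) * Q)
  rw [hsplit]
  exact mul_le_mul_of_nonneg_left (hIle.trans hJle) hπinv

lemma form_nonneg (n : ℕ) (θ : ℝ) (hθ : 0 ≤ θ) (u : Fin n → ℝ) :
    0 ≤ u ⬝ᵥ (Tn n (fun t => |t| ^ θ)) *ᵥ u := by
  rw [toeplitz_form n θ hθ u u]
  have hπ := Real.pi_pos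
  exact mul_nonneg (by positivity)
    (intervalIntegral.integral_nonneg hπ.le (fun t _ => Afn_nonneg n θ u t))


lemma dot_conj {n : ℕ} (P T P' : Matrix (Fin n) (Fin n) ℝ) (hP : Pᵀ = P) (v : Fin n → ℝ) :
    v ⬝ᵥ (P * T * P') *ᵥ v = (P *ᵥ v) ⬝ᵥ T *ᵥ (P' *ᵥ v) := by
  rw [← Matrix.mulVec_mulVec, ← Matrix.mulVec_mulVec]
  rw [Matrix.dotProduct_mulVec, ← Matrix.mulVec_transpose, hP]

/-- **Interpolation of spectral-radius bounds.**
If the spectral radius of `τ_n(|t|^θᵢ)⁻¹ T_n(|t|^θᵢ)` is at most `Cᵢ` (i.e. every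
eigenvalue has absolute value at most `Cᵢ`; the eigenvalues are in fact real and
positive) for `i = 1, 2` and all `n ≥ 1`, then for `θ̂ = (θ₁ + θ₂)/2` the spectral
radius of `τ_n(|t|^θ̂)⁻¹ T_n(|t|^θ̂)` is at most `√(C₁ C₂)` for all `n ≥ 1`. -/
theorem spectral_radius_interpolation
    (θ₁ θ₂ : ℝ) (hθ₁ : 0 ≤ θ₁) (hθ₂ : 0 ≤ θ₂)
    (C₁ C₂ : ℝ) (hC₁ : 0 < C₁) (hC₂ : 0 < C₂)
    (h₁ : ∀ n : ℕ, 1 ≤ n →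
      ∀ lam ∈ spectrum ℝ ((taun n (fun t => |t| ^ θ₁))⁻¹ * Tn n (fun t => |t| ^ θ₁)),
        |lam| ≤ C₁)
    (h₂ : ∀ n : ℕ, 1 ≤ n →
      ∀ lam ∈ spectrum ℝ ((taun n (fun t => |t| ^ θ₂))⁻¹ * Tn n (fun t => |t| ^ θ₂)),
        |lam| ≤ C₂) :
    ∀ n : ℕ, 1 ≤ n →
      ∀ lam ∈ spectrum ℝ ((taun n (fun t => |t| ^ ((θ₁ + θ₂) / 2)))⁻¹ *
          Tn n (fun t => |t| ^ ((θ₁ + θ₂) / 2))),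
        |lam| ≤ Real.sqrt (C₁ * C₂) := by
  intro n hn lam hlam
  have hπ := Real.pi_pos
  set A := taun n (fun t => |t| ^ (-(θ₁/2))) with hA
  set B := taun n (fun t => |t| ^ (-(θ₂/2))) with hB
  set A' := taun n (fun t => |t| ^ (θ₁/2)) with hA'
  set B' := taun n (fun t => |t| ^ (θ₂/2)) with hB'
  set T1 := Tn n (fun t => |t| ^ θ₁) with hT1
  set T2 := Tn n (fun t => |t| ^ θ₂) with hT2
  set Th := Tn n (fun t => |t| ^ ((θ₁ + θ₂)/2)) with hTh
  have hBB' : B * B' = 1 := by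
    rw [hB, hB', taun_pow_mul, show -(θ₂/2) + θ₂/2 = (0:ℝ) from by ring, taun_pow_zero]
  have hB'B : B' * B = 1 := by
    rw [hB, hB', taun_pow_mul, show θ₂/2 + -(θ₂/2) = (0:ℝ) from by ring, taun_pow_zero]
  have hAA' : A * A' = 1 := by
    rw [hA, hA', taun_pow_mul, show -(θ₁/2) + θ₁/2 = (0:ℝ) from by ring, taun_pow_zero]
  have hA'A : A' * A = 1 := by
    rw [hA, hA', taun_pow_mul, show θ₁/2 + -(θ₁/2) = (0:ℝ) from by ring, taun_pow_zero]
  have hBA : B * A = taun n (fun t => |t| ^ (-((θ₁ + θ₂)/2))) := by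
    rw [hB, hA, taun_pow_mul, show -(θ₂/2) + -(θ₁/2) = -((θ₁ + θ₂)/2) from by ring]
  have hAA : A * A = taun n (fun t => |t| ^ (-θ₁)) := by
    rw [hA, taun_pow_mul, show -(θ₁/2) + -(θ₁/2) = -θ₁ from by ring]
  have hBB : B * B = taun n (fun t => |t| ^ (-θ₂)) := by
    rw [hB, taun_pow_mul, show -(θ₂/2) + -(θ₂/2) = -θ₂ from by ring]
  -- move hlam to spectrum of M̂ := A * Th * B
  have key : B * (A * Th * B) * B' = taun n (fun t => |t| ^ (-((θ₁ + θ₂)/2))) * Th := by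
    calc B * (A * Th * B) * B' = (B * A) * Th * (B * B') := by simp only [mul_assoc]
      _ = _ := by rw [hBA, hBB', mul_one]
  rw [taun_pow_inv] at hlam
  rw [← key, spectrum_conj B' B (A * Th * B) hB'B hBB'] at hlam
  -- eigenvector
  obtain ⟨v, hv0, heig⟩ := exists_eigenvector _ _ hlam
  set u := A *ᵥ v with hu
  set w := B *ᵥ v with hw
  have hvv0 : 0 ≤ v ⬝ᵥ v := Finset.sum_nonneg fun i _ => mul_self_nonneg (v i)
  have hvv : 0 < v ⬝ᵥ v :=
    lt_of_le_of_ne hvv0 (fun h => hv0 (dotProduct_self_eq_zero.mp h.symm))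
  -- eigenvalue as quadratic form
  have hform : u ⬝ᵥ Th *ᵥ w = lam * (v ⬝ᵥ v) := by
    rw [hu, hw, ← dot_conj A Th B (taun_transpose n _) v, heig]
    simp [dotProduct_smul, smul_eq_mul]
  -- spectral bounds for θ₁ and θ₂
  have hsym1 : (A * T1 * A)ᵀ = A * T1 * A := by
    rw [Matrix.transpose_mul, Matrix.transpose_mul, taun_transpose, Tn_transpose, mul_assoc]
  have hsym2 : (B * T2 * B)ᵀ = B * T2 * B := by
    rw [Matrix.transpose_mul, Matrix.transpose_mul, taun_transpose, Tn_transpose, mul_assoc]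
  have hkey1 : A * (A * T1 * A) * A' = taun n (fun t => |t| ^ (-θ₁)) * T1 := by
    calc A * (A * T1 * A) * A' = (A * A) * T1 * (A * A') := by simp only [mul_assoc]
      _ = _ := by rw [hAA, hAA', mul_one]
  have hkey2 : B * (B * T2 * B) * B' = taun n (fun t => |t| ^ (-θ₂)) * T2 := by
    calc B * (B * T2 * B) * B' = (B * B) * T2 * (B * B') := by simp only [mul_assoc]
      _ = _ := by rw [hBB, hBB', mul_one]
  have hspec1 : ∀ z ∈ spectrum ℝ (A * T1 * A), |z| ≤ C₁ := by
    intro z hz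
    apply h₁ n hn z
    rw [taun_pow_inv, ← hkey1, spectrum_conj A' A (A * T1 * A) hA'A hAA']
    exact hz
  have hspec2 : ∀ z ∈ spectrum ℝ (B * T2 * B), |z| ≤ C₂ := by
    intro z hz
    apply h₂ n hn z
    rw [taun_pow_inv, ← hkey2, spectrum_conj B' B (B * T2 * B) hB'B hBB']
    exact hz
  have hb1 : u ⬝ᵥ T1 *ᵥ u ≤ C₁ * (v ⬝ᵥ v) := by
    rw [hu, ← dot_conj A T1 A (taun_transpose n _) v]
    exact form_le_of_spectrum _ hsym1 C₁ hspec1 v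
  have hb2 : w ⬝ᵥ T2 *ᵥ w ≤ C₂ * (v ⬝ᵥ v) := by
    rw [hw, ← dot_conj B T2 B (taun_transpose n _) v]
    exact form_le_of_spectrum _ hsym2 C₂ hspec2 v
  -- Cauchy–Schwarz bound
  have hcs := mixed_cs n θ₁ θ₂ hθ₁ hθ₂ u w
  have hcsneg := mixed_cs n θ₁ θ₂ hθ₁ hθ₂ u (-w)
  have hnegeq : u ⬝ᵥ Th *ᵥ (-w) = -(u ⬝ᵥ Th *ᵥ w) := by
    rw [Matrix.mulVec_neg, dotProduct_neg]
  have hnegform : (-w) ⬝ᵥ T2 *ᵥ (-w) = w ⬝ᵥ T2 *ᵥ w := by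
    rw [Matrix.mulVec_neg, dotProduct_neg, neg_dotProduct, neg_neg]
  rw [hnegeq, hnegform] at hcsneg
  have habs : |u ⬝ᵥ Th *ᵥ w| ≤
      Real.sqrt (u ⬝ᵥ T1 *ᵥ u) * Real.sqrt (w ⬝ᵥ T2 *ᵥ w) := by
    rw [abs_le]
    constructor
    · linarith [hcsneg]
    · exact hcs
  have hsq1 : Real.sqrt (u ⬝ᵥ T1 *ᵥ u) ≤ Real.sqrt (C₁ * (v ⬝ᵥ v)) := Real.sqrt_le_sqrt hb1
  have hsq2 : Real.sqrt (w ⬝ᵥ T2 *ᵥ w) ≤ Real.sqrt (C₂ * (v ⬝ᵥ v)) := Real.sqrt_le_sqrt hb2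
  have hprod : Real.sqrt (C₁ * (v ⬝ᵥ v)) * Real.sqrt (C₂ * (v ⬝ᵥ v))
      = Real.sqrt (C₁ * C₂) * (v ⬝ᵥ v) := by
    rw [Real.sqrt_mul hC₁.le, Real.sqrt_mul hC₂.le, Real.sqrt_mul hC₁.le]
    have hss := Real.mul_self_sqrt hvv0
    calc Real.sqrt C₁ * Real.sqrt (v ⬝ᵥ v) * (Real.sqrt C₂ * Real.sqrt (v ⬝ᵥ v))
        = Real.sqrt C₁ * Real.sqrt C₂ * (Real.sqrt (v ⬝ᵥ v) * Real.sqrt (v ⬝ᵥ v)) := by ring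
      _ = Real.sqrt C₁ * Real.sqrt C₂ * (v ⬝ᵥ v) := by rw [hss]
  have hfinal : |lam| * (v ⬝ᵥ v) ≤ Real.sqrt (C₁ * C₂) * (v ⬝ᵥ v) := by
    have h1 : |lam| * (v ⬝ᵥ v) = |lam * (v ⬝ᵥ v)| := by
      rw [abs_mul, abs_of_nonneg hvv0]
    rw [h1, ← hform]
    calc |u ⬝ᵥ Th *ᵥ w| ≤ Real.sqrt (u ⬝ᵥ T1 *ᵥ u) * Real.sqrt (w ⬝ᵥ T2 *ᵥ w) := habs
      _ ≤ Real.sqrt (C₁ * (v ⬝ᵥ v)) * Real.sqrt (C₂ * (v ⬝ᵥ v)) :=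
          mul_le_mul hsq1 hsq2 (Real.sqrt_nonneg _) (Real.sqrt_nonneg _)
      _ = Real.sqrt (C₁ * C₂) * (v ⬝ᵥ v) := hprod
  exact le_of_mul_le_mul_right (by linarith [hfinal]) hvv
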